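/- Let N ≥ 2, 1* := N/(N-1), a > 1*, b ≤ 1. Then the threshold α_c := (1/E) sup_{t>0} h(t), with h(t) := (1+t)^{1*/a - 1/b} / ((1+t)^{1*/a} - t^{1*/a}) and E the Mazya constant, satisfies: lim_{b→0⁺} α_c = 1/E, lim_{b→1⁻} α_c = a/(1* E), lim_{a→1*⁺} α_c = 1/E (for fixed b ≤ 1), and lim_{a→∞} α_c = ∞ (for fixed b ≤ 1). -/

import Mathlib

open MeasureTheory Real Filter Topology Set

noncomputable section

abbrev Euc (N : ℕ) := EuclideanSpace ℝ (Fin N)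

/-- Surface area `ω_{N-1}` of the unit sphere in `ℝ^N`, as `N` times the
volume of the unit ball. -/
def omegaS (N : ℕ) : ℝ := N * (volume (Metric.ball (0 : Euc N) 1)).toReal

/-- Mazya's best constant `E = (1/(N^{N-1} ω_{N-1}))^{1/(N-1)}`. -/
def mazyaE (N : ℕ) : ℝ := (1 / ((N : ℝ) ^ (N - 1) * omegaS N)) ^ (1/((N:ℝ)-1))

/-- The auxiliary function `h` of the critical case. -/
def hFun (os a b t : ℝ) : ℝ :=
  (1+t) ^ (os/a - 1/b) / ((1+t) ^ (os/a) - t ^ (os/a))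

/-- The concentration threshold `α_c = (1/E) sup_{t>0} h(t)`. -/
def alphaC (N : ℕ) (a b : ℝ) : ℝ :=
  (1 / mazyaE N) *
    sSup { r | ∃ t : ℝ, 0 < t ∧ r = hFun ((N:ℝ)/((N:ℝ)-1)) a b t }

/-!
Write `c = 1*/a ∈ (0, 1)`. The tangent-line inequality for the concave `x ↦ x ^ c` gives
`c (1+t)^(c-1) ≤ (1+t)^c - t^c ≤ c t^(c-1)`, hence
`t (1+t)^(-1/b) / c ≤ h(t) ≤ (1+t)^(1-1/b) / c`, and trivially `(1+t)^(-1/b) ≤ h(t)`.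
For `b ≤ 1` this gives `1 ≤ sup h ≤ 1/c = a/1*` (the lower bound from `t → 0`), which settles
`a → 1*`; the first lower bound at `t = 1` grows linearly in `a`, and at large `t` and `b = 1` it
approaches `1/c`, which settles `b → 1`. For `b → 0` split at a small `T`: on `(0, T]` we have
`h ≤ 1/(1 - T^c)`, and on `(T, ∞)` the upper bound is at most `(1+T)^(1-1/b)/c → 0`.
-/

theorem rpow_le_rpow_add_mul_sub {x y c : ℝ} (hx : 0 ≤ x) (hy : 0 < y) (hc₀ : 0 ≤ c)
    (hc₁ : c ≤ 1) : x ^ c ≤ y ^ c + c * y ^ (c - 1) * (x - y) := by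
  have hbern := rpow_one_add_le_one_add_mul_self (s := x / y - 1)
    (by linarith [div_nonneg hx hy.le]) hc₀ hc₁
  rw [add_sub_cancel, div_rpow hx hy.le, div_le_iff₀ (rpow_pos_of_pos hy c)] at hbern
  rw [rpow_sub_one hy.ne']
  refine hbern.trans_eq ?_
  have := hy.ne'
  field_simp

section hFunBounds

variable {os a b t : ℝ} (hc₀ : 0 < os / a) (ht : 0 < t)
include hc₀ ht

theorem one_add_rpow_sub_rpow_pos : 0 < (1 + t) ^ (os / a) - t ^ (os / a) :=
  sub_pos.2 (rpow_lt_rpow ht.le (lt_one_add t) hc₀)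

theorem one_add_rpow_neg_le_hFun : (1 + t) ^ (-(1 / b)) ≤ hFun os a b t := by
  have hD := one_add_rpow_sub_rpow_pos hc₀ ht
  calc (1 + t) ^ (-(1 / b)) = (1 + t) ^ (os / a - 1 / b) / (1 + t) ^ (os / a) := by
        rw [← rpow_sub (by linarith)]; ring_nf
    _ ≤ hFun os a b t := by
        unfold hFun
        gcongr
        linarith [rpow_nonneg ht.le (os / a)]

variable (hc₁ : os / a ≤ 1)
include hc₁

theorem hFun_le_one_add_rpow_div : hFun os a b t ≤ (1 + t) ^ (1 - 1 / b) / (os / a) := by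
  have hD : os / a * (1 + t) ^ (os / a - 1) ≤ (1 + t) ^ (os / a) - t ^ (os / a) := by
    linarith [rpow_le_rpow_add_mul_sub ht.le (by linarith : (0:ℝ) < 1 + t) hc₀.le hc₁]
  calc hFun os a b t ≤ (1 + t) ^ (os / a - 1 / b) / (os / a * (1 + t) ^ (os / a - 1)) := by
        unfold hFun; gcongr
    _ = (1 + t) ^ (1 - 1 / b) / (os / a) := by
        rw [div_mul_eq_div_div_swap, ← rpow_sub (by linarith)]; ring_nf

theorem mul_one_add_rpow_neg_div_le_hFun : t * (1 + t) ^ (-(1 / b)) / (os / a) ≤ hFun os a b t := by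
  have h1t : (0:ℝ) < 1 + t := by linarith
  have hD : (1 + t) ^ (os / a) - t ^ (os / a) ≤ os / a * (1 + t) ^ (os / a) / t := by
    have htan := rpow_le_rpow_add_mul_sub h1t.le ht hc₀.le hc₁
    have hmono : t ^ (os / a) ≤ (1 + t) ^ (os / a) := rpow_le_rpow ht.le (by linarith) hc₀.le
    rw [rpow_sub_one ht.ne', add_sub_cancel_right, mul_one, mul_div_assoc'] at htan
    rw [le_div_iff₀ ht]
    have := mul_le_mul_of_nonneg_right htan ht.le
    rw [add_mul, div_mul_cancel₀ _ ht.ne'] at this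
    nlinarith
  calc t * (1 + t) ^ (-(1 / b)) / (os / a)
        = (1 + t) ^ (os / a - 1 / b) / (os / a * (1 + t) ^ (os / a) / t) := by
        rw [sub_eq_add_neg, rpow_add h1t]
        field_simp
    _ ≤ hFun os a b t := by
        unfold hFun
        gcongr
        exact one_add_rpow_sub_rpow_pos hc₀ ht

end hFunBounds

def supH (os a b : ℝ) : ℝ := sSup {r | ∃ t : ℝ, 0 < t ∧ r = hFun os a b t}

theorem alphaC_eq_mul_supH (N : ℕ) (a b : ℝ) :
    alphaC N a b = 1 / mazyaE N * supH ((N : ℝ) / ((N : ℝ) - 1)) a b := rfl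

section supH

variable {os a b : ℝ} (hc₀ : 0 < os / a) (hc₁ : os / a ≤ 1) (hb₀ : 0 < b) (hb₁ : b ≤ 1)
include hc₀ hc₁ hb₀ hb₁

theorem hFun_le_div {t : ℝ} (ht : 0 < t) : hFun os a b t ≤ a / os := by
  calc hFun os a b t ≤ (1 + t) ^ (1 - 1 / b) / (os / a) := hFun_le_one_add_rpow_div hc₀ ht hc₁
    _ ≤ 1 / (os / a) := by
        gcongr
        exact rpow_le_one_of_one_le_of_nonpos (by linarith)
          (by linarith [one_le_one_div hb₀ hb₁])
    _ = a / os := one_div_div os a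

theorem bddAbove_hFun : BddAbove {r | ∃ t : ℝ, 0 < t ∧ r = hFun os a b t} :=
  ⟨a / os, by rintro r ⟨t, ht, rfl⟩; exact hFun_le_div hc₀ hc₁ hb₀ hb₁ ht⟩

theorem hFun_le_supH {t : ℝ} (ht : 0 < t) : hFun os a b t ≤ supH os a b :=
  le_csSup (bddAbove_hFun hc₀ hc₁ hb₀ hb₁) ⟨t, ht, rfl⟩

theorem supH_le_div : supH os a b ≤ a / os := by
  refine Real.sSup_le ?_ (by rw [← inv_div]; positivity)
  rintro r ⟨t, ht, rfl⟩
  exact hFun_le_div hc₀ hc₁ hb₀ hb₁ ht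

theorem one_le_supH : 1 ≤ supH os a b := by
  have hcont : Tendsto (fun t : ℝ => (1 + t) ^ (-(1 / b))) (𝓝[>] 0) (𝓝 1) := by
    have : ContinuousAt (fun t : ℝ => (1 + t) ^ (-(1 / b))) 0 := by fun_prop (disch := norm_num)
    simpa using this.tendsto.mono_left nhdsWithin_le_nhds
  refine le_of_tendsto hcont ?_
  filter_upwards [self_mem_nhdsWithin] with t ht
  exact (one_add_rpow_neg_le_hFun hc₀ ht).trans (hFun_le_supH hc₀ hc₁ hb₀ hb₁ ht)

theorem supH_le_max {T : ℝ} (hT₀ : 0 < T) (hT₁ : T < 1) :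
    supH os a b ≤ max (1 - T ^ (os / a))⁻¹ ((1 + T) ^ (1 - 1 / b) / (os / a)) := by
  have hTc : T ^ (os / a) < 1 := rpow_lt_one hT₀.le hT₁ hc₀
  refine Real.sSup_le ?_ (le_max_of_le_left (by have := sub_pos.2 hTc; positivity))
  rintro r ⟨t, ht, rfl⟩
  rcases le_or_gt t T with htT | hTt
  · refine le_max_of_le_left ?_
    have hnum : (1 + t) ^ (os / a - 1 / b) ≤ 1 :=
      rpow_le_one_of_one_le_of_nonpos (by linarith) (by linarith [one_le_one_div hb₀ hb₁])
    have hden : 1 - T ^ (os / a) ≤ (1 + t) ^ (os / a) - t ^ (os / a) := by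
      linarith [one_le_rpow (by linarith : (1:ℝ) ≤ 1 + t) hc₀.le,
        rpow_le_rpow ht.le htT hc₀.le]
    rw [hFun, ← one_div]
    exact div_le_div₀ zero_le_one hnum (by linarith) hden
  · refine le_max_of_le_right ((hFun_le_one_add_rpow_div hc₀ ht hc₁).trans ?_)
    exact div_le_div_of_nonneg_right (rpow_le_rpow_of_nonpos (by linarith) (by linarith)
      (by linarith [one_le_one_div hb₀ hb₁])) hc₀.le

end supH

section limits

variable {os a b : ℝ}

theorem tendsto_supH_nhdsGT_zero (hc₀ : 0 < os / a) (hc₁ : os / a ≤ 1) :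
    Tendsto (fun b => supH os a b) (𝓝[>] 0) (𝓝 1) := by
  refine tendsto_order.2 ⟨fun m hm => ?_, fun M hM => ?_⟩
  · filter_upwards [Ioc_mem_nhdsGT one_pos] with b hb
    exact hm.trans_le (one_le_supH hc₀ hc₁ hb.1 hb.2)
  obtain ⟨T, hT, hTM⟩ : ∃ T ∈ Ioo (0:ℝ) 1, (1 - T ^ (os / a))⁻¹ < M := by
    have hcont : ContinuousAt (fun T : ℝ => (1 - T ^ (os / a))⁻¹) 0 :=
      (continuousAt_const.sub (continuousAt_rpow_const 0 _ (Or.inr hc₀.le))).inv₀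
        (by simp [zero_rpow hc₀.ne'])
    have hlim : Tendsto (fun T : ℝ => (1 - T ^ (os / a))⁻¹) (𝓝[>] 0) (𝓝 1) := by
      simpa [zero_rpow hc₀.ne'] using hcont.tendsto.mono_left nhdsWithin_le_nhds
    exact ((show ∀ᶠ T in 𝓝[>] (0:ℝ), T ∈ Ioo 0 1 from Ioo_mem_nhdsGT one_pos).and
      (hlim.eventually_lt_const hM)).exists
  have hexp : Tendsto (fun b : ℝ => 1 - 1 / b) (𝓝[>] 0) atBot := by
    simpa [sub_eq_add_neg] using
      tendsto_atBot_add_const_left _ 1 (tendsto_neg_atTop_atBot.comp tendsto_inv_nhdsGT_zero)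
  have hsmall : Tendsto (fun b : ℝ => (1 + T) ^ (1 - 1 / b) / (os / a)) (𝓝[>] 0) (𝓝 0) := by
    have hbase : (1:ℝ) < 1 + T := by linarith [hT.1]
    simpa using ((tendsto_rpow_atBot_of_base_gt_one _ hbase).comp hexp).div_const (os / a)
  have hbM : ∀ᶠ b : ℝ in 𝓝[>] 0, (1 + T) ^ (1 - 1 / b) / (os / a) < M :=
    hsmall.eventually_lt_const (one_pos.trans hM)
  filter_upwards [Ioc_mem_nhdsGT one_pos, hbM] with b hb hbM
  exact (supH_le_max hc₀ hc₁ hb.1 hb.2 hT.1 hT.2).trans_lt (max_lt hTM hbM)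

theorem tendsto_supH_nhdsLT_one (hc₀ : 0 < os / a) (hc₁ : os / a ≤ 1) :
    Tendsto (fun b => supH os a b) (𝓝[<] 1) (𝓝 (a / os)) := by
  refine tendsto_order.2 ⟨fun m hm => ?_, fun M hM => ?_⟩
  · obtain ⟨T, hT, hTm⟩ : ∃ T > 0, m < T * (1 + T) ^ (-(1 / 1 : ℝ)) / (os / a) := by
      have hlim : Tendsto (fun T : ℝ => (1 - (1 + T)⁻¹) / (os / a)) atTop (𝓝 (a / os)) := by
        simpa using ((tendsto_inv_atTop_zero.comp (tendsto_atTop_add_const_left _ 1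
          tendsto_id)).const_sub 1).div_const (os / a)
      have heq : ∀ᶠ T : ℝ in atTop,
          (1 - (1 + T)⁻¹) / (os / a) = T * (1 + T) ^ (-(1 / 1 : ℝ)) / (os / a) := by
        filter_upwards [eventually_gt_atTop 0] with T hT
        have : 1 + T ≠ 0 := by positivity
        rw [div_one, rpow_neg_one]
        field_simp
        ring
      exact ((eventually_gt_atTop 0).and
        ((hlim.congr' heq).eventually_const_lt hm)).exists
    have hcont : ContinuousAt (fun b : ℝ => T * (1 + T) ^ (-(1 / b)) / (os / a)) 1 := by
      fun_prop (disch := positivity)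
    filter_upwards [Ioo_mem_nhdsLT one_pos,
      (hcont.tendsto.mono_left nhdsWithin_le_nhds).eventually_const_lt hTm] with b hb hbm
    exact hbm.trans_le ((mul_one_add_rpow_neg_div_le_hFun hc₀ hT hc₁).trans
      (hFun_le_supH hc₀ hc₁ hb.1 hb.2.le hT))
  · filter_upwards [Ioo_mem_nhdsLT one_pos] with b hb
    exact (supH_le_div hc₀ hc₁ hb.1 hb.2.le).trans_lt hM

variable (hos : 0 < os) (hb₀ : 0 < b) (hb₁ : b ≤ 1)
include hos hb₀ hb₁

theorem tendsto_supH_nhdsGT :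
    Tendsto (fun a => supH os a b) (𝓝[>] os) (𝓝 1) := by
  have hdiv : Tendsto (fun a => a / os) (𝓝[>] os) (𝓝 1) := by
    simpa [div_self hos.ne'] using
      ((continuous_id.div_const os).tendsto os).mono_left nhdsWithin_le_nhds
  have hc : ∀ᶠ a in 𝓝[>] os, 0 < os / a ∧ os / a ≤ 1 := by
    filter_upwards [self_mem_nhdsWithin] with a (ha : os < a)
    exact ⟨div_pos hos (hos.trans ha), (div_le_one (hos.trans ha)).2 ha.le⟩
  refine tendsto_of_tendsto_of_tendsto_of_le_of_le' tendsto_const_nhds hdiv ?_ ?_ <;>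
    filter_upwards [hc] with a ⟨hc₀, hc₁⟩
  · exact one_le_supH hc₀ hc₁ hb₀ hb₁
  · exact supH_le_div hc₀ hc₁ hb₀ hb₁

theorem tendsto_supH_atTop : Tendsto (fun a => supH os a b) atTop atTop := by
  have hC : 0 < (1 + 1 : ℝ) ^ (-(1 / b)) / os := by positivity
  refine tendsto_atTop_mono' atTop ?_ (tendsto_id.const_mul_atTop hC)
  filter_upwards [eventually_gt_atTop os] with a ha
  have ha₀ : 0 < a := hos.trans ha
  calc (1 + 1 : ℝ) ^ (-(1 / b)) / os * id a = 1 * (1 + 1) ^ (-(1 / b)) / (os / a) := by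
        simp only [id]; field_simp
    _ ≤ hFun os a b 1 := mul_one_add_rpow_neg_div_le_hFun (div_pos hos ha₀) one_pos
        ((div_le_one ha₀).2 ha.le)
    _ ≤ supH os a b := hFun_le_supH (div_pos hos ha₀) ((div_le_one ha₀).2 ha.le) hb₀ hb₁ one_pos

end limits

theorem mazyaE_pos {N : ℕ} (hN : 0 < N) : 0 < mazyaE N := by
  have hvol : 0 < (volume (Metric.ball (0 : Euc N) 1)).toReal :=
    ENNReal.toReal_pos (Metric.measure_ball_pos volume _ one_pos).ne' measure_ball_lt_top.ne
  have : 0 < omegaS N := mul_pos (Nat.cast_pos.2 hN) hvol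
  unfold mazyaE
  positivity


/-- asymptotic behavior of `α_c` in the regime `a > 1*`, `b ≤ 1`. -/
theorem alphaC_asymptotics (N : ℕ) (hN : 2 ≤ N) :
    (∀ a : ℝ, (N : ℝ) / ((N : ℝ) - 1) < a →
      Tendsto (fun b : ℝ => alphaC N a b) (nhdsWithin 0 (Set.Ioi 0))
        (nhds (1 / mazyaE N))) ∧
    (∀ a : ℝ, (N : ℝ) / ((N : ℝ) - 1) < a →
      Tendsto (fun b : ℝ => alphaC N a b) (nhdsWithin 1 (Set.Iio 1))
        (nhds (a / ((N : ℝ) / ((N : ℝ) - 1) * mazyaE N)))) ∧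
    (∀ b : ℝ, 0 < b → b ≤ 1 →
      Tendsto (fun a : ℝ => alphaC N a b)
        (nhdsWithin ((N : ℝ) / ((N : ℝ) - 1)) (Set.Ioi ((N : ℝ) / ((N : ℝ) - 1))))
        (nhds (1 / mazyaE N))) ∧
    (∀ b : ℝ, 0 < b → b ≤ 1 →
      Tendsto (fun a : ℝ => alphaC N a b) atTop atTop) := by
  have hE : 0 < mazyaE N := mazyaE_pos (by omega)
  set os := (N : ℝ) / ((N : ℝ) - 1)
  have hos : 0 < os := div_pos (by positivity) (by linarith [(Nat.ofNat_le_cast.2 hN : (2:ℝ) ≤ N)])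
  have hc : ∀ a, os < a → 0 < os / a ∧ os / a ≤ 1 := fun a ha =>
    ⟨div_pos hos (hos.trans ha), (div_le_one (hos.trans ha)).2 ha.le⟩
  simp only [alphaC_eq_mul_supH]
  refine ⟨fun a ha => ?_, fun a ha => ?_, fun b hb₀ hb₁ => ?_, fun b hb₀ hb₁ => ?_⟩
  · simpa using (tendsto_supH_nhdsGT_zero (hc a ha).1 (hc a ha).2).const_mul (1 / mazyaE N)
  · convert (tendsto_supH_nhdsLT_one (hc a ha).1 (hc a ha).2).const_mul (1 / mazyaE N) using 2
    field_simp
  · simpa using (tendsto_supH_nhdsGT hos hb₀ hb₁).const_mul (1 / mazyaE N)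
  · exact (tendsto_supH_atTop hos hb₀ hb₁).const_mul_atTop (by positivity)
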